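/- arXiv:2206.05170 — 2 statements merged into one kernel-verified Lean document; each statement's English description precedes it below -/
import Mathlib

section
/- Let g be a positive definite form of degree d on ℝⁿ and let μ_g be the Lebesgue measure restricted to G = {g ≤ 1}. Then for every form h of degree d, ∫_G |h(x)| g(x) dx = ((n+d)/(n+2d)) ∫_G |h(x)| dx. -/
/-!
Write `G = {g ≤ 1}`, `A = ∫_G |h|` and `ν = |h| dx` on `G`. Since `{g ≤ t}` is the dilate of `G`
by `t ^ (1/d)` and `|h|` is homogeneous of degree `d`, `ν {g ≤ t} = t ^ q A` for `0 < t ≤ 1`,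
with `q = (n + d) / d`. The layer cake formula then gives
`∫_G |h| g = ∫₀¹ ν {g > t} dt = ∫₀¹ (1 - t ^ q) A dt = q / (q + 1) · A = (n + d) / (n + 2d) · A`.
-/

open MeasureTheory MvPolynomial Set Module
open scoped Pointwise

theorem MvPolynomial.IsHomogeneous.eval_smul {σ R : Type*} [CommSemiring R]
    {p : MvPolynomial σ R} {d : ℕ} (hp : p.IsHomogeneous d) (c : R) (x : σ → R) :
    eval (c • x) p = c ^ d * eval x p := by
  rw [eval_eq, eval_eq, Finset.mul_sum]
  refine Finset.sum_congr rfl fun m hm ↦ ?_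
  have hdeg : ∑ i ∈ m.support, m i = d := by
    simpa [Finsupp.weight, Finsupp.linearCombination, Finsupp.sum] using
      hp (mem_support_iff.mp hm)
  simp only [Pi.smul_apply, smul_eq_mul, mul_pow, Finset.prod_mul_distrib,
    Finset.prod_pow_eq_pow_sum, hdeg]
  ring

namespace MeasureTheory

theorem Integrable.integral_eq_integral_Ioc_meas_lt {α : Type*} [MeasurableSpace α]
    {μ : Measure α} {f : α → ℝ} {M : ℝ} (hf : Integrable f μ) (hf0 : 0 ≤ᵐ[μ] f)
    (hfM : f ≤ᵐ[μ] fun _ ↦ M) :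
    ∫ x, f x ∂μ = ∫ t in Ioc 0 M, μ.real {x | t < f x} := by
  rw [hf.integral_eq_integral_meas_lt hf0, setIntegral_eq_of_subset_of_ae_sdiff_eq_zero
    nullMeasurableSet_Ioi Ioc_subset_Ioi_self (Filter.Eventually.of_forall fun t ht ↦ ?_)]
  have htM : M < t := by simp_all
  rw [measureReal_def, ENNReal.toReal_eq_zero_iff, measure_eq_zero_iff_ae_notMem]
  exact Or.inl (hfM.mono fun x hx ↦ (hx.trans_lt htM).not_gt)

theorem measureReal_withDensity_ofReal {α : Type*} [MeasurableSpace α] {μ : Measure α}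
    {w : α → ℝ} {s : Set α} (hs : MeasurableSet s) (hw : IntegrableOn w s μ)
    (hw0 : 0 ≤ᵐ[μ.restrict s] w) :
    (μ.withDensity fun x ↦ ENNReal.ofReal (w x)).real s = ∫ x in s, w x ∂μ := by
  rw [measureReal_def, withDensity_apply _ hs, ← ofReal_integral_eq_lintegral_ofReal hw hw0,
    ENNReal.toReal_ofReal (integral_nonneg_of_ae hw0)]

end MeasureTheory

section Homogeneous

variable {E : Type*} [NormedAddCommGroup E] [NormedSpace ℝ E] {g w : E → ℝ} {d e : ℝ}

theorem smul_setOf_le_of_homogeneous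
    (hg : ∀ c : ℝ, 0 < c → ∀ x, g (c • x) = c ^ d * g x) {c : ℝ} (hc : 0 < c) (s : ℝ) :
    c • {x | g x ≤ s} = {x | g x ≤ c ^ d * s} := by
  ext x
  rw [mem_smul_set_iff_inv_smul_mem₀ hc.ne', mem_ofPred_eq, mem_ofPred_eq, hg _ (inv_pos.2 hc),
    Real.inv_rpow hc.le, inv_mul_le_iff₀ (by positivity)]

theorem isCompact_setOf_le_one_of_homogeneous [FiniteDimensional ℝ E] (hgc : Continuous g)
    (hd : 0 < d) (hg : ∀ c : ℝ, 0 < c → ∀ x, g (c • x) = c ^ d * g x)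
    (hpos : ∀ x, x ≠ 0 → 0 < g x) : IsCompact {x | g x ≤ 1} := by
  rcases subsingleton_or_nontrivial E with hE | hE
  · exact Set.subsingleton_of_subsingleton.isCompact
  obtain ⟨u, hu, hmin⟩ := (isCompact_sphere (0 : E) 1).exists_isMinOn
    (NormedSpace.sphere_nonempty.2 zero_le_one) hgc.continuousOn
  have hm : 0 < g u := hpos u (ne_zero_of_mem_unit_sphere ⟨u, hu⟩)
  refine Metric.isCompact_of_isClosed_isBounded (isClosed_le hgc continuous_const)
    ((Metric.isBounded_closedBall (x := 0) (r := (g u)⁻¹ ^ d⁻¹)).subset fun x hx ↦ ?_)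
  rw [mem_ofPred_eq] at hx
  rw [Metric.mem_closedBall, dist_zero_right]
  rcases eq_or_ne x 0 with rfl | hx0
  · rw [norm_zero]; positivity
  have hnx : 0 < ‖x‖ := norm_pos_iff.2 hx0
  have hlower : ‖x‖ ^ d * g u ≤ g x := by
    have : g u ≤ g (‖x‖⁻¹ • x) :=
      hmin (mem_sphere_zero_iff_norm.2 (by simp [norm_smul, hnx.ne']))
    rw [hg _ (inv_pos.2 hnx), Real.inv_rpow hnx.le] at this
    rwa [le_inv_mul_iff₀ (by positivity)] at this
  have : ‖x‖ ^ d ≤ (g u)⁻¹ := by rw [← one_div, le_div_iff₀ hm]; linarith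
  calc ‖x‖ = (‖x‖ ^ d) ^ d⁻¹ := by
        rw [← Real.rpow_mul hnx.le, mul_inv_cancel₀ hd.ne', Real.rpow_one]
    _ ≤ (g u)⁻¹ ^ d⁻¹ := by gcongr

variable [FiniteDimensional ℝ E] [MeasurableSpace E] [BorelSpace E]
  (μ : Measure E) [μ.IsAddHaarMeasure]

theorem setIntegral_setOf_le_of_homogeneous (hd : 0 < d)
    (hg : ∀ c : ℝ, 0 < c → ∀ x, g (c • x) = c ^ d * g x)
    (hw : ∀ c : ℝ, 0 < c → ∀ x, w (c • x) = c ^ e * w x) {t : ℝ} (ht : 0 < t) :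
    ∫ x in {x | g x ≤ t}, w x ∂μ
      = t ^ ((finrank ℝ E + e) / d) * ∫ x in {x | g x ≤ 1}, w x ∂μ := by
  set c := t ^ d⁻¹
  have hc : 0 < c := Real.rpow_pos_of_pos ht _
  have hcd : c ^ d = t := by rw [← Real.rpow_mul ht.le, inv_mul_cancel₀ hd.ne', Real.rpow_one]
  have hcomp := Measure.setIntegral_comp_smul_of_pos μ w {x | g x ≤ 1} hc
  rw [smul_setOf_le_of_homogeneous hg hc, hcd, mul_one, eq_inv_smul_iff₀ (by positivity)]
    at hcomp
  simp_rw [← hcomp, hw c hc, integral_const_mul, smul_eq_mul, ← mul_assoc]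
  congr 1
  rw [← Real.rpow_natCast, ← Real.rpow_add hc, ← Real.rpow_mul ht.le]
  ring_nf

theorem setIntegral_mul_eq_of_homogeneous (hd : 0 < d) (he : 0 ≤ e) (hgm : Measurable g)
    (hg0 : ∀ x, 0 ≤ g x) (hg : ∀ c : ℝ, 0 < c → ∀ x, g (c • x) = c ^ d * g x)
    (hwm : Measurable w) (hw0 : ∀ x, 0 ≤ w x)
    (hw : ∀ c : ℝ, 0 < c → ∀ x, w (c • x) = c ^ e * w x)
    (hwi : IntegrableOn w {x | g x ≤ 1} μ) :
    ∫ x in {x | g x ≤ 1}, w x * g x ∂μ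
      = (finrank ℝ E + e) / (finrank ℝ E + e + d) * ∫ x in {x | g x ≤ 1}, w x ∂μ := by
  set G := {x | g x ≤ 1}
  set A := ∫ x in G, w x ∂μ
  set q := (finrank ℝ E + e) / d
  have hq : 0 ≤ q := by positivity
  have hGm : ∀ s : ℝ, MeasurableSet {x | g x ≤ s} := fun s ↦ measurableSet_le hgm measurable_const
  set ν := (μ.restrict G).withDensity fun x ↦ ENNReal.ofReal (w x)
  have : IsFiniteMeasure ν := isFiniteMeasure_withDensity_ofReal hwi.2
  have hν : ∀ s, MeasurableSet s → ν.real s = ∫ x in s ∩ G, w x ∂μ := fun s hs ↦ by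
    rw [measureReal_withDensity_ofReal hs hwi.integrableOn (Filter.Eventually.of_forall hw0),
      Measure.restrict_restrict hs]
  have hν_le : ∀ t, 0 < t → t ≤ 1 → ν.real {x | g x ≤ t} = t ^ q * A := fun t ht ht1 ↦ by
    rw [hν _ (hGm t), inter_eq_left.2 fun x hx ↦ hx.trans ht1,
      setIntegral_setOf_le_of_homogeneous μ hd hg hw ht]
  have hν_gt : ∀ t ∈ Ioc (0 : ℝ) 1, ν.real {x | t < g x} = (1 - t ^ q) * A := fun t ht ↦ by
    have hcompl : {x | t < g x} = {x | g x ≤ t}ᶜ := by ext; simp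
    rw [hcompl, measureReal_compl (hGm t), hν_le t ht.1 ht.2, hν _ MeasurableSet.univ,
      univ_inter]
    ring
  have hg_le : ∀ᵐ x ∂ν, g x ≤ 1 :=
    (withDensity_absolutelyContinuous _ _).ae_le (ae_restrict_mem (hGm 1))
  have hgi : Integrable g ν := Integrable.of_bound hgm.aestronglyMeasurable 1
    (hg_le.mono fun x hx ↦ by rwa [Real.norm_of_nonneg (hg0 x)])
  calc ∫ x in G, w x * g x ∂μ = ∫ x, g x ∂ν := by
        rw [integral_withDensity_eq_integral_toReal_smul hwm.ennreal_ofReal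
          (Filter.Eventually.of_forall fun _ ↦ ENNReal.ofReal_lt_top)]
        simp only [ENNReal.toReal_ofReal (hw0 _), smul_eq_mul]
    _ = ∫ t in Ioc 0 1, ν.real {x | t < g x} :=
        hgi.integral_eq_integral_Ioc_meas_lt (Filter.Eventually.of_forall hg0) hg_le
    _ = ∫ t in Ioc 0 1, (1 - t ^ q) * A := setIntegral_congr_fun measurableSet_Ioc hν_gt
    _ = (1 - 1 / (q + 1)) * A := by
        rw [← intervalIntegral.integral_of_le zero_le_one, intervalIntegral.integral_mul_const,
          intervalIntegral.integral_sub intervalIntegrable_const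
            (intervalIntegral.intervalIntegrable_rpow' (by linarith)),
          integral_rpow (Or.inl (by linarith)), Real.zero_rpow (by linarith)]
        simp
    _ = _ := by
        simp only [q]
        field_simp
        ring

end Homogeneous

theorem stmt9_general (n d : ℕ) (hd : 1 ≤ d)
    (g h : MvPolynomial (Fin n) ℝ) (hg : g.IsHomogeneous d)
    (hgpos : ∀ x : Fin n → ℝ, x ≠ 0 → 0 < eval x g)
    (hh : h.IsHomogeneous d) :
    ∫ x in {x : Fin n → ℝ | eval x g ≤ 1}, |eval x h| * eval x g
      = (((n : ℝ) + d) / ((n : ℝ) + 2 * d)) *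
          ∫ x in {x : Fin n → ℝ | eval x g ≤ 1}, |eval x h| := by
  have hd' : (0 : ℝ) < d := by exact_mod_cast hd
  have hg_hom : ∀ c : ℝ, 0 < c → ∀ x : Fin n → ℝ, eval (c • x) g = c ^ (d : ℝ) * eval x g :=
    fun c _ x ↦ by rw [Real.rpow_natCast, hg.eval_smul]
  have hh_hom : ∀ c : ℝ, 0 < c → ∀ x : Fin n → ℝ, |eval (c • x) h| = c ^ (d : ℝ) * |eval x h| :=
    fun c hc x ↦ by rw [Real.rpow_natCast, hh.eval_smul, abs_mul, abs_of_pos (pow_pos hc d)]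
  have hg0 : ∀ x, 0 ≤ eval x g := fun x ↦ by
    rcases eq_or_ne x 0 with rfl | hx
    · simpa [zero_pow (by omega : d ≠ 0)] using (hg.eval_smul 0 0).ge
    · exact (hgpos x hx).le
  have hG := isCompact_setOf_le_one_of_homogeneous (continuous_eval g) hd' hg_hom hgpos
  rw [setIntegral_mul_eq_of_homogeneous volume hd' d.cast_nonneg (continuous_eval g).measurable
    hg0 hg_hom (continuous_eval h).abs.measurable (fun _ ↦ abs_nonneg _) hh_hom
    ((continuous_eval h).abs.continuousOn.integrableOn_compact hG), finrank_fin_fun]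
  ring

theorem stmt9 (n d : ℕ) (hn : 1 ≤ n) (hd : 1 ≤ d)
    (g h : MvPolynomial (Fin n) ℝ) (hg : g.IsHomogeneous d)
    (hgpos : ∀ x : Fin n → ℝ, x ≠ 0 → 0 < eval x g)
    (hh : h.IsHomogeneous d) :
    ∫ x in {x : Fin n → ℝ | eval x g ≤ 1}, |eval x h| * eval x g
      = (((n : ℝ) + d) / ((n : ℝ) + 2 * d)) *
          ∫ x in {x : Fin n → ℝ | eval x g ≤ 1}, |eval x h| :=
  stmt9_general n d hd g h hg hgpos hh
end

section
/- Let d ≥ 4 even, n ≥ 3, and let g̃ : ℝ^{n-1} → ℝ be a non-negative polynomial with a zero y ∈ ℝ^{n-1} at which the Hessian matrix Hess_y g̃ is positive definite. Then there exists δ > 0 such that ∫_{B(y,δ)} g̃(z)^{-n/d} dz < ∞. -/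
/-!
Near a zero `y` of a nonnegative polynomial with positive definite Hessian, the gradient vanishes
and the Hessian stays uniformly positive on unit directions, so a second-order Taylor bound along
rays gives `p z ≥ c ‖z - y‖²`. Hence `p ^ (-(m + 1) / d) ≤ C ‖z - y‖ ^ (-2 (m + 1) / d)`, which is
integrable near `y` in dimension `m` because `2 (m + 1) / d < m` once `d ≥ 4` and `m ≥ 2`.
-/

open MeasureTheory MvPolynomial Set Filter Topology Metric

theorem HasDerivAt.mvPolynomial_eval {σ : Type*} [Fintype σ] {γ : ℝ → σ → ℝ} {γ' : σ → ℝ}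
    {t : ℝ} (hγ : HasDerivAt γ γ' t) (p : MvPolynomial σ ℝ) :
    HasDerivAt (fun s => eval (γ s) p) (∑ i, eval (γ t) (pderiv i p) * γ' i) t := by
  classical
  induction p using MvPolynomial.induction_on with
  | C a => simpa using hasDerivAt_const t a
  | add p q hp hq => simpa [add_mul, Finset.sum_add_distrib] using hp.fun_add hq
  | mul_X p j hp =>
    simp only [eval_mul, eval_X]
    refine (hp.fun_mul (hasDerivAt_pi.1 hγ j)).congr_deriv ?_
    simp only [Derivation.leibniz, pderiv_X, Pi.single_apply, smul_eq_mul, mul_ite, mul_one,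
      mul_zero, map_add, map_zero, map_mul, eval_X, apply_ite (eval (γ t)), add_mul, ite_mul,
      zero_mul, Finset.sum_add_distrib, Finset.sum_ite_eq, Finset.mem_univ, ↓reduceIte,
      Finset.sum_mul, mul_right_comm]
    rw [add_comm]
    congr 1
    exact Finset.sum_congr rfl fun i _ => by ring

theorem monotoneOn_Icc_of_hasDerivAt_nonneg {f f' : ℝ → ℝ} {a b : ℝ}
    (hf : ∀ s ∈ Icc a b, HasDerivAt f (f' s) s) (hf' : ∀ s ∈ Icc a b, 0 ≤ f' s) :
    MonotoneOn f (Icc a b) :=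
  monotoneOn_of_hasDerivWithinAt_nonneg (convex_Icc a b)
    (fun s hs => (hf s hs).continuousAt.continuousWithinAt)
    (fun s hs => (hf s (interior_subset hs)).hasDerivWithinAt)
    (fun s hs => hf' s (interior_subset hs))

theorem add_mul_add_half_mul_sq_le {g g' g'' : ℝ → ℝ} {c t : ℝ} (ht : 0 ≤ t)
    (hg : ∀ s ∈ Icc 0 t, HasDerivAt g (g' s) s) (hg' : ∀ s ∈ Icc 0 t, HasDerivAt g' (g'' s) s)
    (hc : ∀ s ∈ Icc 0 t, c ≤ g'' s) :
    g 0 + g' 0 * t + c / 2 * t ^ 2 ≤ g t := by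
  have hg'_lower : ∀ s ∈ Icc 0 t, g' 0 + c * s ≤ g' s := by
    intro s hs
    have := monotoneOn_Icc_of_hasDerivAt_nonneg (f := fun s => g' s - c * s)
      (fun s hs => (hg' s hs).sub ((hasDerivAt_id s).const_mul c))
      (fun s hs => by simpa using hc s hs) (left_mem_Icc.2 ht) hs hs.1
    simp only [mul_zero, sub_zero] at this
    linarith
  have := monotoneOn_Icc_of_hasDerivAt_nonneg (f := fun s => g s - g' 0 * s - c / 2 * s ^ 2)
    (fun s hs => ((hg s hs).sub ((hasDerivAt_id s).const_mul (g' 0))).sub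
      ((hasDerivAt_pow 2 s).const_mul (c / 2)))
    (fun s hs => by
      have := hg'_lower s hs
      simp only [mul_one, Nat.cast_ofNat, Nat.add_one_sub_one, pow_one, sub_nonneg]
      linarith)
    (left_mem_Icc.2 ht) (right_mem_Icc.2 ht) ht
  simp only [mul_zero, sub_zero, ne_eq, OfNat.ofNat_ne_zero, not_false_eq_true, zero_pow] at this
  linarith

theorem exists_pos_eventually_forall_le {X Y : Type*} [TopologicalSpace X] [TopologicalSpace Y]
    {F : X → Y → ℝ} (hF : Continuous (Function.uncurry F)) {K : Set Y} (hK : IsCompact K)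
    {x₀ : X} (hpos : ∀ k ∈ K, 0 < F x₀ k) : ∃ ε > 0, ∀ᶠ x in 𝓝 x₀, ∀ k ∈ K, ε ≤ F x k := by
  rcases K.eq_empty_or_nonempty with rfl | hne
  · exact ⟨1, one_pos, by simp⟩
  obtain ⟨k₀, hk₀, hmin⟩ :=
    hK.exists_isMinOn hne (f := F x₀) (hF.comp (Continuous.prodMk_right x₀)).continuousOn
  refine ⟨F x₀ k₀ / 2, half_pos (hpos k₀ hk₀), hK.eventually_forall_of_forall_eventually ?_⟩
  intro k hk
  have : F x₀ k₀ / 2 < Function.uncurry F (x₀, k) := by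
    have := isMinOn_iff.1 hmin k hk
    have := hpos k₀ hk₀
    simp only [Function.uncurry_apply_pair]
    linarith
  exact (hF.continuousAt.eventually (lt_mem_nhds this)).mono fun _ h => h.le

theorem integrableOn_ball_rpow_neg_of_mul_norm_sub_sq_le {E : Type*} [NormedAddCommGroup E]
    [NormedSpace ℝ E] [FiniteDimensional ℝ E] [MeasurableSpace E] [BorelSpace E]
    {μ : Measure E} [μ.IsAddHaarMeasure] {f : E → ℝ} (hf : Measurable f) {y : E} {c δ e : ℝ}
    (hc : 0 < c) (he : 0 ≤ e) (hdim : 2 * e < Module.finrank ℝ E)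
    (hle : ∀ z ∈ ball y δ, c * ‖z - y‖ ^ 2 ≤ f z) :
    IntegrableOn (fun z => f z ^ (-e)) (ball y δ) μ := by
  have hdim_pos : 1 ≤ Module.finrank ℝ E := by
    have : (0 : ℝ) < Module.finrank ℝ E := by linarith
    exact_mod_cast this
  have : Nontrivial E := Module.nontrivial_of_finrank_pos hdim_pos
  rw [← (measurePreserving_add_left μ y).integrableOn_comp_preimage
    (measurableEmbedding_addLeft y)]
  simp only [preimage_add_ball, sub_self]
  refine integrableOn_ball_of_norm_le_rpow hdim_pos (C := c ^ (-e)) hdim ?_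
    ((hf.comp (measurable_const_add y)).pow_const _).aestronglyMeasurable
  filter_upwards [ae_restrict_mem measurableSet_ball, ae_restrict_of_ae (μ.ae_ne 0)]
    with x hx hx0
  have hlow : c * ‖x‖ ^ 2 ≤ f (y + x) := by
    simpa using hle (y + x) (by simpa using hx)
  have hpos : 0 < c * ‖x‖ ^ 2 := by positivity
  rw [Function.comp_apply, Real.norm_of_nonneg (Real.rpow_nonneg (hpos.le.trans hlow) _)]
  calc f (y + x) ^ (-e) ≤ (c * ‖x‖ ^ 2) ^ (-e) :=
        Real.rpow_le_rpow_of_nonpos hpos hlow (by linarith)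
    _ = c ^ (-e) * ‖x‖ ^ (-(2 * e)) := by
      rw [Real.mul_rpow hc.le (by positivity), ← Real.rpow_natCast,
        ← Real.rpow_mul (norm_nonneg x)]
      ring_nf

theorem setOf_sum_sq_sub_lt_subset_ball {σ : Type*} [Fintype σ] (y : σ → ℝ) {δ : ℝ}
    (hδ : 0 < δ) : {z : σ → ℝ | ∑ i, (z i - y i) ^ 2 < δ ^ 2} ⊆ ball y δ := by
  intro z hz
  rw [mem_ball, dist_eq_norm, pi_norm_lt_iff hδ]
  intro i
  refine abs_lt_of_sq_lt_sq ?_ hδ.le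
  calc (z - y) i ^ 2 = (z i - y i) ^ 2 := rfl
    _ ≤ ∑ j, (z j - y j) ^ 2 :=
      Finset.single_le_sum (f := fun j => (z j - y j) ^ 2) (fun j _ => sq_nonneg _)
        (Finset.mem_univ i)
    _ < δ ^ 2 := hz

namespace MvPolynomial

variable {σ : Type*} [Fintype σ]

noncomputable def hessianForm (p : MvPolynomial σ ℝ) (z v : σ → ℝ) : ℝ :=
  ∑ i, ∑ j, eval z (pderiv i (pderiv j p)) * v i * v j

theorem continuous_hessianForm (p : MvPolynomial σ ℝ) :
    Continuous fun zv : (σ → ℝ) × (σ → ℝ) => p.hessianForm zv.1 zv.2 := by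
  have hq (q : MvPolynomial σ ℝ) : Continuous fun z : σ → ℝ => eval z q := continuous_eval q
  unfold hessianForm
  fun_prop

theorem hasDerivAt_eval_line (p : MvPolynomial σ ℝ) (y v : σ → ℝ) (t : ℝ) :
    HasDerivAt (fun s => eval (y + s • v) p) (∑ i, eval (y + t • v) (pderiv i p) * v i) t :=
  ((hasDerivAt_id t).smul_const v).const_add y |>.mvPolynomial_eval p |>.congr_deriv (by simp)

theorem hasDerivAt_sum_eval_pderiv_line (p : MvPolynomial σ ℝ) (y v : σ → ℝ) (t : ℝ) :
    HasDerivAt (fun s => ∑ i, eval (y + s • v) (pderiv i p) * v i)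
      (p.hessianForm (y + t • v) v) t := by
  have := HasDerivAt.fun_sum (u := Finset.univ) fun i _ =>
    (hasDerivAt_eval_line (pderiv i p) y v t).mul_const (v i)
  refine this.congr_deriv ?_
  rw [hessianForm, Finset.sum_comm]
  simp only [Finset.sum_mul]

theorem half_mul_sq_le_eval_line {p : MvPolynomial σ ℝ} (hnn : ∀ x, 0 ≤ eval x p)
    {y : σ → ℝ} (hy : eval y p = 0) (v : σ → ℝ) {ε t : ℝ} (ht : 0 ≤ t)
    (hε : ∀ s ∈ Icc 0 t, ε ≤ p.hessianForm (y + s • v) v) :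
    ε / 2 * t ^ 2 ≤ eval (y + t • v) p := by
  have hmin : IsLocalMin (fun s : ℝ => eval (y + s • v) p) 0 :=
    Eventually.of_forall fun s => by simpa [hy] using hnn (y + s • v)
  have hgrad := hmin.hasDerivAt_eq_zero (hasDerivAt_eval_line p y v 0)
  rw [zero_smul, add_zero] at hgrad
  have := add_mul_add_half_mul_sq_le ht (fun s _ => hasDerivAt_eval_line p y v s)
    (fun s _ => hasDerivAt_sum_eval_pderiv_line p y v s) hε
  simpa [hy, hgrad] using this

theorem exists_mul_norm_sub_sq_le_eval {p : MvPolynomial σ ℝ} (hnn : ∀ x, 0 ≤ eval x p)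
    {y : σ → ℝ} (hy : eval y p = 0) (hpos : ∀ v, v ≠ 0 → 0 < p.hessianForm y v) :
    ∃ δ > 0, ∃ c > 0, ∀ z ∈ ball y δ, c * ‖z - y‖ ^ 2 ≤ eval z p := by
  obtain ⟨ε, hε, hev⟩ := exists_pos_eventually_forall_le p.continuous_hessianForm
    (isCompact_sphere 0 1) (x₀ := y) fun v hv => hpos v (ne_zero_of_mem_unit_sphere ⟨v, hv⟩)
  obtain ⟨δ, hδ, hball⟩ := eventually_nhds_iff_ball.1 hev
  refine ⟨δ, hδ, ε / 2, half_pos hε, fun z hz => ?_⟩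
  obtain rfl | hne := eq_or_ne z y
  · simp [hy]
  set t := ‖z - y‖
  have ht : 0 < t := norm_pos_iff.2 (sub_ne_zero.2 hne)
  set v := t⁻¹ • (z - y)
  have hv : ‖v‖ = 1 := norm_smul_inv_norm (sub_ne_zero.2 hne)
  have hz' : y + t • v = z := by simp [v, smul_smul, ht.ne']
  rw [← hz']
  refine half_mul_sq_le_eval_line hnn hy v ht.le fun s hs => hball _ ?_ v (by simpa using hv)
  rw [mem_ball, dist_eq_norm, add_sub_cancel_left, norm_smul, hv, mul_one,
    Real.norm_of_nonneg hs.1]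
  exact hs.2.trans_lt (mem_ball_iff_norm.1 hz)

end MvPolynomial

theorem stmt19_general (m d : ℕ) (hm : 2 ≤ m) (hd : 4 ≤ d)
    (p : MvPolynomial (Fin m) ℝ)
    (hnn : ∀ y : Fin m → ℝ, 0 ≤ eval y p)
    (y : Fin m → ℝ) (hy : eval y p = 0)
    (hHess : ∀ v : Fin m → ℝ, v ≠ 0 →
      0 < ∑ i, ∑ j, eval y (pderiv i (pderiv j p)) * v i * v j) :
    ∃ δ > 0, IntegrableOn
      (fun z : Fin m → ℝ => (eval z p) ^ (-(((m : ℝ) + 1) / d)))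
      {z : Fin m → ℝ | ∑ i, (z i - y i) ^ 2 < δ ^ 2} volume := by
  obtain ⟨δ, hδ, c, hc, hle⟩ := exists_mul_norm_sub_sq_le_eval hnn hy hHess
  have hexp : 2 * (((m : ℝ) + 1) / d) < Module.finrank ℝ (Fin m → ℝ) := by
    have hm' : (2 : ℝ) ≤ m := by exact_mod_cast hm
    have hd' : (4 : ℝ) ≤ d := by exact_mod_cast hd
    rw [Module.finrank_fin_fun, mul_div_assoc', div_lt_iff₀ (by positivity)]
    nlinarith
  exact ⟨δ, hδ, (integrableOn_ball_rpow_neg_of_mul_norm_sub_sq_le (continuous_eval p).measurable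
    hc (by positivity) hexp hle).mono_set (setOf_sum_sq_sub_lt_subset_ball y hδ)⟩

theorem stmt19 (m d : ℕ) (hm : 2 ≤ m) (hd : 4 ≤ d) (hde : Even d)
    (p : MvPolynomial (Fin m) ℝ)
    (hnn : ∀ y : Fin m → ℝ, 0 ≤ eval y p)
    (y : Fin m → ℝ) (hy : eval y p = 0)
    (hHess : ∀ v : Fin m → ℝ, v ≠ 0 →
      0 < ∑ i, ∑ j, eval y (pderiv i (pderiv j p)) * v i * v j) :
    ∃ δ > 0, IntegrableOn
      (fun z : Fin m → ℝ => (eval z p) ^ (-(((m : ℝ) + 1) / d)))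
      {z : Fin m → ℝ | ∑ i, (z i - y i) ^ 2 < δ ^ 2} volume :=
  stmt19_general m d hm hd p hnn y hy hHess
end
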